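/- Let d ≥ 2 and σ_d(θ)=dθ on ℝ/ℤ. Let G be a σ_d-periodic gap of period n such that σ_dⁿ restricted to the vertex set G ∩ S¹ is injective and monotonically semiconjugate to an irrational circle rotation via a monotone map φ : ∂G → S¹. Then every fiber of φ contains at most finitely many edges of G; equivalently, no fiber of φ is an infinite concatenation of edges of G. -/

import Mathlib

open Metric Set

noncomputable section

instance : Fact ((0:ℝ) < 1) := ⟨one_pos⟩

/-- The point on the unit circle in `ℂ` corresponding to `x ∈ ℝ/ℤ`, i.e. `exp(2πix)`. -/
noncomputable def pt (x : AddCircle (1:ℝ)) : ℂ := (AddCircle.toCircle x : ℂ)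

/-- The chord of the closed unit disk joining `pt a` and `pt b`. -/
noncomputable def chord (a b : AddCircle (1:ℝ)) : Set ℂ := segment ℝ (pt a) (pt b)

/-- The map `θ ↦ dθ` on `ℝ/ℤ`. -/
def sig (d : ℕ) (x : AddCircle (1:ℝ)) : AddCircle (1:ℝ) := d • x

/-- Two chords are linked (cross) if they are distinct and intersect in the open unit disk. -/
def Linked (a b x y : AddCircle (1:ℝ)) : Prop :=
  chord a b ≠ chord x y ∧ (chord a b ∩ chord x y ∩ Metric.ball (0:ℂ) 1).Nonempty

/-- The representative of `x ∈ ℝ/ℤ` in `[0,1)`. -/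
noncomputable def rep (x : AddCircle (1:ℝ)) : ℝ := ((AddCircle.equivIco 1 0) x : ℝ)

/-- The open positively oriented arc from `a` to `b`. -/
def arc (a b : AddCircle (1:ℝ)) : Set (AddCircle (1:ℝ)) :=
  {x | 0 < rep (x - a) ∧ rep (x - a) < rep (b - a)}

/-- The closed positively oriented arc from `a` to `b`. -/
def closedArc (a b : AddCircle (1:ℝ)) : Set (AddCircle (1:ℝ)) := arc a b ∪ {a, b}

/-- `(a,b)` is a hole of `A`: `a, b ∈ A` and the nonempty open arc `(a,b)` misses `A`. -/
def IsHole (A : Set (AddCircle (1:ℝ))) (a b : AddCircle (1:ℝ)) : Prop :=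
  a ∈ A ∧ b ∈ A ∧ (arc a b).Nonempty ∧ arc a b ∩ A = ∅

/-- The convex hull in `ℂ` of the set of circle points corresponding to `A ⊆ ℝ/ℤ`. -/
noncomputable def hull (A : Set (AddCircle (1:ℝ))) : Set ℂ := convexHull ℝ (pt '' A)

/-- `p, q, r` are distinct and in strict positive circular order. -/
def cyc (p q r : AddCircle (1:ℝ)) : Prop := 0 < rep (q - p) ∧ rep (q - p) < rep (r - p)

/-- A tuple of circle points is in (weak) positive circular order. -/
def CircOrd {k : ℕ} [NeZero k] (v : Fin k → AddCircle (1:ℝ)) : Prop :=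
  Monotone fun i => rep (v i - v 0)

/-!
Let `T = σ_dⁿ`. A hole of `A` of length `ℓ < d⁻ⁿ` cannot collapse during the next `n` steps,
so it returns under `T` to a hole of `A` of length `dⁿℓ`. Lengths stay below `1`, hence the
`T`-orbit of every hole reaches a hole of length at least `d⁻ⁿ`, and there are only finitely
many of these. Sending each edge of a fiber `φ⁻¹(y)` to such a long return `Tᵏe` is injective:
`φ(Tᵏe) = y + kα` recovers `k` because `α` is irrational, and `Tᵏ` is injective on `A`.
-/

theorem coe_rep (x : AddCircle (1:ℝ)) : ((rep x : ℝ) : AddCircle (1:ℝ)) = x :=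
  (AddCircle.equivIco 1 0).symm_apply_apply x

theorem rep_coe (r : ℝ) : rep (r : AddCircle (1:ℝ)) = Int.fract r := by
  simp [rep, AddCircle.coe_equivIco_mk_apply]

theorem rep_mem_Ico (x : AddCircle (1:ℝ)) : rep x ∈ Ico (0:ℝ) 1 := by
  simpa [rep] using ((AddCircle.equivIco 1 0) x).2

theorem rep_eq_zero_iff {x : AddCircle (1:ℝ)} : rep x = 0 ↔ x = 0 := by
  refine ⟨fun h => by simpa [h] using (coe_rep x).symm, ?_⟩
  rintro rfl
  simpa using rep_coe 0

theorem rep_sub_of_rep_le {p q : AddCircle (1:ℝ)} (h : rep p ≤ rep q) :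
    rep (q - p) = rep q - rep p := by
  rw [← coe_rep q, ← coe_rep p, ← AddCircle.coe_sub, rep_coe, coe_rep, coe_rep,
    Int.fract_eq_self]
  have hp := rep_mem_Ico p
  have hq := rep_mem_Ico q
  constructor <;> linarith [hp.1, hq.2]

theorem finite_of_le_rep_sub {P : Set (AddCircle (1:ℝ))} {c : ℝ} (hc : 0 < c)
    (hP : ∀ p ∈ P, ∀ q ∈ P, p ≠ q → c ≤ rep (q - p)) : P.Finite := by
  refine Finite.of_injOn (f := fun p => ⌊rep p / c⌋) (t := Icc 0 ⌊1 / c⌋) ?_ ?_ (finite_Icc _ _)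
  · intro p _
    exact ⟨Int.floor_nonneg.mpr (div_nonneg (rep_mem_Ico p).1 hc.le),
      Int.floor_le_floor (div_le_div_of_nonneg_right (rep_mem_Ico p).2.le hc.le)⟩
  · intro p hp q hq hfloor
    by_contra hne
    wlog hpq : rep p ≤ rep q generalizing p q
    · exact this hq hp hfloor.symm (Ne.symm hne) (le_of_not_ge hpq)
    have hdiff : |rep p / c - rep q / c| < 1 := Int.abs_sub_lt_one_of_floor_eq_floor hfloor
    have hsep := hP p hp q hq hne
    rw [rep_sub_of_rep_le hpq] at hsep
    rw [← sub_div, abs_div, abs_of_pos hc, div_lt_one hc, abs_sub_comm,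
      abs_of_nonneg (sub_nonneg.mpr hpq)] at hdiff
    linarith

theorem iterate_sig (d m : ℕ) (x : AddCircle (1:ℝ)) : (sig d)^[m] x = d ^ m • x := by
  rw [show sig d = (d • ·) from rfl, smul_iterate]

theorem rep_iterate_sig_sub {d m : ℕ} {a b : AddCircle (1:ℝ)}
    (h : (d:ℝ) ^ m * rep (b - a) < 1) :
    rep ((sig d)^[m] b - (sig d)^[m] a) = (d:ℝ) ^ m * rep (b - a) := by
  rw [iterate_sig, iterate_sig, ← smul_sub, ← coe_rep (b - a), ← AddCircle.coe_nsmul,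
    nsmul_eq_mul, rep_coe, coe_rep]
  push_cast
  rw [Int.fract_eq_self]
  exact ⟨mul_nonneg (by positivity) (rep_mem_Ico _).1, h⟩

namespace IsHole

variable {A : Set (AddCircle (1:ℝ))} {a b : AddCircle (1:ℝ)}

theorem rep_pos (h : IsHole A a b) : 0 < rep (b - a) := by
  obtain ⟨x, hx, hxb⟩ := h.2.2.1
  linarith

theorem rep_le_of_mem (h : IsHole A a b) {c : AddCircle (1:ℝ)} (hc : c ∈ A) (hca : c ≠ a) :
    rep (b - a) ≤ rep (c - a) := by
  by_contra! hlt
  have hpos : 0 < rep (c - a) :=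
    (rep_mem_Ico _).1.lt_of_ne' (mt rep_eq_zero_iff.mp (sub_ne_zero.mpr hca))
  exact (h.2.2.2.subset ⟨⟨hpos, hlt⟩, hc⟩ : _ ∈ (∅ : Set _))

theorem right_unique {b' : AddCircle (1:ℝ)} (h : IsHole A a b) (h' : IsHole A a b') :
    b = b' := by
  have hba : b ≠ a := fun e => by simpa [e, rep_eq_zero_iff.mpr] using h.rep_pos
  have hb'a : b' ≠ a := fun e => by simpa [e, rep_eq_zero_iff.mpr] using h'.rep_pos
  have hrep := le_antisymm (h.rep_le_of_mem h'.2.1 hb'a) (h'.rep_le_of_mem h.2.1 hba)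
  rw [← sub_left_inj (a := a), ← coe_rep (b - a), hrep, coe_rep]

end IsHole

theorem finite_isHole_le_rep (B : Set (AddCircle (1:ℝ))) {c : ℝ} (hc : 0 < c) :
    {e : AddCircle (1:ℝ) × AddCircle (1:ℝ) | IsHole B e.1 e.2 ∧ c ≤ rep (e.2 - e.1)}.Finite := by
  refine Finite.of_finite_image (f := Prod.fst) (finite_of_le_rep_sub hc ?_) ?_
  · rintro _ ⟨e, he, rfl⟩ _ ⟨e', he', rfl⟩ hne
    exact he.2.trans (he.1.rep_le_of_mem he'.1.1 (Ne.symm hne))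
  · intro e he e' he' hfst
    exact Prod.ext hfst (he.1.right_unique (hfst ▸ he'.1))

theorem injective_nsmul_coe_of_irrational {α : ℝ} (hα : Irrational α) :
    Function.Injective fun k : ℕ => k • (α : AddCircle (1:ℝ)) :=
  injective_nsmul_iff_not_isOfFinAddOrder.mpr <|
    AddCircle.not_isOfFinAddOrder_iff_forall_rat_ne_div.mpr fun q hq => hα ⟨q, by simpa using hq⟩

theorem apply_iterate_eq_add_nsmul {X G : Type*} [AddMonoid G] {T : X → X} {A : Set X}
    {φ : X → G} {β : G} (hT : MapsTo T A A) (hφ : ∀ x ∈ A, φ (T x) = φ x + β) (k : ℕ)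
    {x : X} (hx : x ∈ A) : φ (T^[k] x) = φ x + k • β := by
  induction k with
  | zero => simp
  | succ k ih =>
    rw [Function.iterate_succ_apply', hφ _ (hT.iterate k hx), ih, succ_nsmul, add_assoc]

def HolesCollapseOrPersist (d : ℕ) (A : Set (AddCircle (1:ℝ))) : Prop :=
  ∀ i : ℕ, ∀ a b, IsHole ((sig d)^[i] '' A) a b →
    sig d a = sig d b ∨ IsHole ((sig d)^[i+1] '' A) (sig d a) (sig d b)

section Dynamics

variable {d : ℕ} {A : Set (AddCircle (1:ℝ))}

theorem IsHole.iterate_sig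
    (hhole : HolesCollapseOrPersist d A)
    {a b : AddCircle (1:ℝ)} (h : IsHole A a b) {m : ℕ} (hm : (sig d)^[m] a ≠ (sig d)^[m] b) :
    IsHole ((sig d)^[m] '' A) ((sig d)^[m] a) ((sig d)^[m] b) := by
  induction m with
  | zero => simpa using h
  | succ m ih =>
    rw [Function.iterate_succ_apply', Function.iterate_succ_apply'] at hm ⊢
    have hm' : (sig d)^[m] a ≠ (sig d)^[m] b := fun e => hm (congrArg (sig d) e)
    exact (hhole m _ _ (ih hm')).resolve_left hm

theorem IsHole.iterate_sig_of_rep_lt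
    (hhole : HolesCollapseOrPersist d A)
    (hd : 0 < d) {a b : AddCircle (1:ℝ)} (h : IsHole A a b) {m : ℕ}
    (hlt : (d:ℝ) ^ m * rep (b - a) < 1) :
    IsHole ((sig d)^[m] '' A) ((sig d)^[m] a) ((sig d)^[m] b) ∧
      rep ((sig d)^[m] b - (sig d)^[m] a) = (d:ℝ) ^ m * rep (b - a) := by
  have hlen := rep_iterate_sig_sub hlt
  refine ⟨h.iterate_sig hhole fun e => ?_, hlen⟩
  have hpos : 0 < (d:ℝ) ^ m * rep (b - a) := by
    have := h.rep_pos
    positivity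
  rw [e, sub_self, rep_eq_zero_iff.mpr rfl] at hlen
  linarith

theorem IsHole.exists_inv_pow_le_rep_iterate {n : ℕ} (hdn : 1 < d ^ n)
    (hinv : (sig d)^[n] '' A = A)
    (hhole : HolesCollapseOrPersist d A)
    {a b : AddCircle (1:ℝ)} (h : IsHole A a b) :
    ∃ k, IsHole A (((sig d)^[n])^[k] a) (((sig d)^[n])^[k] b) ∧
      ((d:ℝ) ^ n)⁻¹ ≤ rep (((sig d)^[n])^[k] b - ((sig d)^[n])^[k] a) := by
  have hd : 0 < d := Nat.pos_of_ne_zero (by rintro rfl; rcases n with _ | n <;> simp at hdn)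
  have hdn' : (1:ℝ) < (d:ℝ) ^ n := by exact_mod_cast hdn
  by_contra! hshort
  have hgrow : ∀ k, IsHole A (((sig d)^[n])^[k] a) (((sig d)^[n])^[k] b) ∧
      rep (((sig d)^[n])^[k] b - ((sig d)^[n])^[k] a) = ((d:ℝ) ^ n) ^ k * rep (b - a) := by
    intro k
    induction k with
    | zero => simpa using h
    | succ k ih =>
      obtain ⟨hk, hlen⟩ := ih
      have hlt : (d:ℝ) ^ n * rep (((sig d)^[n])^[k] b - ((sig d)^[n])^[k] a) < 1 := by
        simpa [mul_inv_cancel₀ (by positivity : (d:ℝ) ^ n ≠ 0)] using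
          mul_lt_mul_of_pos_left (hshort k hk) (by positivity : (0:ℝ) < (d:ℝ) ^ n)
      obtain ⟨hk', hlen'⟩ := hk.iterate_sig_of_rep_lt hhole hd hlt
      rw [hinv] at hk'
      rw [Function.iterate_succ_apply', Function.iterate_succ_apply']
      exact ⟨hk', by rw [hlen', hlen, pow_succ]; ring⟩
  obtain ⟨k, hk⟩ := pow_unbounded_of_one_lt (rep (b - a))⁻¹ hdn'
  have hlt_one := (hgrow k).2 ▸ (rep_mem_Ico _).2
  rw [inv_lt_iff_one_lt_mul₀ h.rep_pos] at hk
  linarith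

end Dynamics

theorem stmt_12_general (d : ℕ) (hd : 2 ≤ d) (n : ℕ) (hn : 0 < n)
    (A : Set (AddCircle (1:ℝ)))
    (hinv : (sig d)^[n] '' A = A)
    (hinj : Set.InjOn ((sig d)^[n]) A)
    (hhole : ∀ i : ℕ, ∀ a b, IsHole ((sig d)^[i] '' A) a b →
      sig d a = sig d b ∨ IsHole ((sig d)^[i+1] '' A) (sig d a) (sig d b))
    (φ : AddCircle (1:ℝ) → AddCircle (1:ℝ)) (α : ℝ) (hα : Irrational α)
    (hsemi : ∀ x ∈ A, φ ((sig d)^[n] x) = φ x + (α : AddCircle (1:ℝ))) :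
    ∀ y : AddCircle (1:ℝ),
      {e : AddCircle (1:ℝ) × AddCircle (1:ℝ) |
        IsHole A e.1 e.2 ∧ φ e.1 = y ∧ φ e.2 = y}.Finite := by
  intro y
  have hT : MapsTo ((sig d)^[n]) A A := by
    simpa only [hinv] using mapsTo_image ((sig d)^[n]) A
  have hdn : 1 < d ^ n := Nat.one_lt_pow hn.ne' (by omega)
  choose! k hk using fun (e : AddCircle (1:ℝ) × AddCircle (1:ℝ)) (he : IsHole A e.1 e.2) =>
    he.exists_inv_pow_le_rep_iterate hdn hinv hhole
  refine Finite.of_injOn (f := fun e => (((sig d)^[n])^[k e] e.1, ((sig d)^[n])^[k e] e.2))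
    (fun e he => hk e he.1) ?_ (finite_isHole_le_rep A (by positivity))
  rintro e ⟨he, hφe, -⟩ e' ⟨he', hφe', -⟩ heq
  simp only [Prod.mk.injEq] at heq
  have hkk : k e = k e' := injective_nsmul_coe_of_irrational hα <| by
    have := congrArg φ heq.1
    rwa [apply_iterate_eq_add_nsmul hT hsemi _ he.1, apply_iterate_eq_add_nsmul hT hsemi _ he'.1,
      hφe, hφe', add_right_inj] at this
  rw [hkk] at heq
  exact Prod.ext (hinj.iterate hT _ he.1 he'.1 heq.1) (hinj.iterate hT _ he.2.1 he'.2.1 heq.2)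

/-- for a periodic gap of degree one whose return map is monotonically
semiconjugate to an irrational rotation, every fiber of the semiconjugacy contains
at most finitely many edges of the gap. -/
theorem stmt_12 (d : ℕ) (hd : 2 ≤ d) (n : ℕ) (hn : 0 < n)
    (A : Set (AddCircle (1:ℝ))) (hA : IsClosed A)
    (hinv : (sig d)^[n] '' A = A)
    (hinj : Set.InjOn ((sig d)^[n]) A)
    (hhole : ∀ i : ℕ, ∀ a b, IsHole ((sig d)^[i] '' A) a b →
      sig d a = sig d b ∨ IsHole ((sig d)^[i+1] '' A) (sig d a) (sig d b))
    (φ : AddCircle (1:ℝ) → AddCircle (1:ℝ)) (α : ℝ) (hα : Irrational α)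
    (hsemi : ∀ x ∈ A, φ ((sig d)^[n] x) = φ x + (α : AddCircle (1:ℝ)))
    (hmono : ∀ p ∈ A, ∀ q ∈ A, ∀ r ∈ A, cyc p q r → ¬ cyc (φ p) (φ r) (φ q)) :
    ∀ y : AddCircle (1:ℝ),
      {e : AddCircle (1:ℝ) × AddCircle (1:ℝ) |
        IsHole A e.1 e.2 ∧ φ e.1 = y ∧ φ e.2 = y}.Finite :=
  stmt_12_general d hd n hn A hinv hinj hhole φ α hα hsemi
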